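/- arXiv:1403.7683 — 2 statements merged into one kernel-verified Lean document; each statement's English description precedes it below -/
import Mathlib

section
/- Let c₁ > 0 and c₂ > 0 be real constants, let 0 < ε < 1, let t > 0 be real, and let r₁, r₂ be nonnegative integers. Define γ := ε + c₂ · (r₁ + r₂) / (c₁ · ε · t). Then c₂^{r₁ + r₂} · exp(−c₁ · t · γ · min(γ, 1)) ≤ exp(−c₁ · t · min(ε, ε²)). -/
/-!
Write `γ = ε + δ` with `δ = c₂ (r₁ + r₂) / (c₁ ε t)`. Since `ε ≤ min γ 1`, the exponent satisfies
`c₁ t γ min(γ, 1) ≥ c₁ t γ ε = c₁ t ε² + c₂ (r₁ + r₂)`, and the extra `c₂ (r₁ + r₂)` pays for the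
prefactor because `c₂ ^ n ≤ exp (c₂ n)` (from `c₂ ≤ exp c₂`). Finally `min(ε, ε²) ≤ ε²`.
-/

open MeasureTheory ProbabilityTheory Matrix

noncomputable def spec {n d : ℕ} (A : Matrix (Fin n) (Fin d) ℝ) : ℝ :=
  ‖LinearMap.toContinuousLinearMap (Matrix.toEuclideanLin A)‖

noncomputable def frob {n d : ℕ} (A : Matrix (Fin n) (Fin d) ℝ) : ℝ :=
  Real.sqrt (∑ i, ∑ j, (A i j) ^ 2)

noncomputable def svals {n d : ℕ} (A : Matrix (Fin n) (Fin d) ℝ) : Fin d → ℝ :=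
  fun i => Real.sqrt ((Matrix.isHermitian_conjTranspose_mul_self A).eigenvalues i)

noncomputable def nuclearNorm {n d : ℕ} (A : Matrix (Fin n) (Fin d) ℝ) : ℝ :=
  ∑ i, svals A i

noncomputable def nuclearRank {n d : ℕ} (A : Matrix (Fin n) (Fin d) ℝ) : ℝ :=
  nuclearNorm A / spec A

noncomputable def gaussianMatrix (t d : ℕ) : Measure (Fin t → Fin d → ℝ) :=
  Measure.pi fun _ => Measure.pi fun _ => gaussianReal 0 (t : NNReal)⁻¹

open Real

lemma pow_le_exp_mul {c : ℝ} (hc : 0 ≤ c) (n : ℕ) : c ^ n ≤ exp (c * n) :=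
  calc c ^ n ≤ exp c ^ n := pow_le_pow_left₀ hc (by linarith [add_one_le_exp c]) n
    _ = exp (c * n) := by rw [← exp_nat_mul, mul_comm]

lemma pow_mul_exp_neg_le {a c ε : ℝ} (ha : 0 < a) (hc : 0 ≤ c) (hε : 0 < ε) (hε1 : ε ≤ 1)
    (n : ℕ) :
    c ^ n * exp (-(a * (ε + c * n / (a * ε)) * min (ε + c * n / (a * ε)) 1)) ≤
      exp (-(a * ε ^ 2)) := by
  set γ := ε + c * n / (a * ε) with hγ
  have hexponent : a * γ * ε = a * ε ^ 2 + c * n := by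
    rw [hγ]
    field_simp
  have hε_le_min : ε ≤ min γ 1 := le_min (le_add_of_nonneg_right (by positivity)) hε1
  calc c ^ n * exp (-(a * γ * min γ 1)) ≤ exp (c * n) * exp (-(a * γ * ε)) := by
        gcongr
        exact pow_le_exp_mul hc n
    _ = exp (-(a * ε ^ 2)) := by
        rw [← exp_add, hexponent]
        ring_nf

/-- The elementary inequality underlying Lemma 3 of the paper:
the rank-dependent tail bound with γ = ε + c₂(r₁+r₂)/(c₁ ε t) is always
at most exp(−c₁ t min(ε, ε²)). -/
theorem rank_tail_bound_absorb (c₁ c₂ ε t : ℝ) (hc₁ : 0 < c₁) (hc₂ : 0 < c₂)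
    (hε : 0 < ε) (hε1 : ε < 1) (ht : 0 < t) (r₁ r₂ : ℕ) :
    c₂ ^ (r₁ + r₂) *
        Real.exp (-(c₁ * t * (ε + c₂ * ((r₁ : ℝ) + (r₂ : ℝ)) / (c₁ * ε * t)) *
          min (ε + c₂ * ((r₁ : ℝ) + (r₂ : ℝ)) / (c₁ * ε * t)) 1))
      ≤ Real.exp (-(c₁ * t * min ε (ε ^ 2))) := by
  have h := pow_mul_exp_neg_le (mul_pos hc₁ ht) hc₂.le hε hε1.le (r₁ + r₂)
  rw [Nat.cast_add, mul_right_comm c₁ t ε] at h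
  refine h.trans (exp_le_exp.2 (neg_le_neg ?_))
  exact mul_le_mul_of_nonneg_left (min_le_right ε (ε ^ 2)) (mul_pos hc₁ ht).le
end

section
/- Let ε > 0, c > 0 and t > 0 be reals, let L, S be positive integers, and let X₁, …, X_L ∈ ℝ^{n×d}, Y₁, …, Y_S ∈ ℝ^{d×m} be matrices satisfying ‖X_l‖ ≤ e^{−l+1} for all 1 ≤ l ≤ L and ‖Y_s‖ ≤ e^{−s+1} for all 1 ≤ s ≤ S. Set X := Σ_{l=1}^{L} X_l and Y := Σ_{s=1}^{S} Y_s, and let M ∈ ℝ^{d×d} be any matrix such that for all l, s: ‖X_l M Y_s‖ ≤ (ε + c · (rank(X_l) + rank(Y_s)) / t) · ‖X_l‖ · ‖Y_s‖. Then ‖X M Y‖ ≤ ε · e²/(e−1)² + (c · e / ((e−1) · t)) · ( Σ_{l=1}^{L} rank(X_l) · ‖X_l‖ + Σ_{s=1}^{S} rank(Y_s) · ‖Y_s‖ ). -/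
open MeasureTheory ProbabilityTheory Matrix

/-!
Expanding `X M Y = ∑_{l,s} X_l M Y_s` and applying the triangle inequality reduces the claim to
bounding `∑_{l,s} (ε + c (rank X_l + rank Y_s) / t) ‖X_l‖ ‖Y_s‖`. This double sum splits into
`ε (∑ ‖X_l‖)(∑ ‖Y_s‖)` plus two terms in which one factor is a single sum `∑ ‖X_l‖` or `∑ ‖Y_s‖`.
Each such sum is at most the geometric series `∑_{i ≥ 0} e^{-i} = e / (e - 1)`.
-/

lemma spec_nonneg {n d : ℕ} (A : Matrix (Fin n) (Fin d) ℝ) : 0 ≤ spec A :=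
  norm_nonneg _

lemma spec_sum_le {n d : ℕ} {ι : Type*} (s : Finset ι) (f : ι → Matrix (Fin n) (Fin d) ℝ) :
    spec (∑ i ∈ s, f i) ≤ ∑ i ∈ s, spec (f i) := by
  unfold spec
  rw [map_sum, map_sum]
  exact norm_sum_le _ _

lemma spec_sum_mul_mul_sum_le {n d m : ℕ} {ι κ : Type*} (s : Finset ι) (u : Finset κ)
    (X : ι → Matrix (Fin n) (Fin d) ℝ) (M : Matrix (Fin d) (Fin d) ℝ)
    (Y : κ → Matrix (Fin d) (Fin m) ℝ) :
    spec ((∑ l ∈ s, X l) * M * ∑ k ∈ u, Y k) ≤ ∑ l ∈ s, ∑ k ∈ u, spec (X l * M * Y k) := by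
  rw [Matrix.sum_mul, Matrix.sum_mul]
  simp only [Matrix.mul_sum]
  exact (spec_sum_le _ _).trans (Finset.sum_le_sum fun l _ => spec_sum_le _ _)

lemma sum_le_exp_one_div_exp_one_sub_one {N : ℕ} (g : Fin N → ℝ)
    (hg : ∀ i : Fin N, g i ≤ Real.exp (-((i : ℝ) + 1) + 1)) :
    ∑ i, g i ≤ Real.exp 1 / (Real.exp 1 - 1) := by
  have hpow (i : ℕ) : Real.exp (-((i : ℝ) + 1) + 1) = Real.exp (-1) ^ i := by
    rw [← Real.exp_nat_mul]
    ring_nf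
  have hsum : Real.exp (-1) ^ 0 / (1 - Real.exp (-1)) = Real.exp 1 / (Real.exp 1 - 1) := by
    have : Real.exp 1 - 1 ≠ 0 := by linarith [Real.add_one_lt_exp one_ne_zero]
    rw [Real.exp_neg]
    field_simp
  calc ∑ i, g i ≤ ∑ i : Fin N, Real.exp (-1) ^ (i : ℕ) :=
        Finset.sum_le_sum fun i _ => (hg i).trans_eq (hpow i)
    _ = ∑ i ∈ Finset.Ico 0 N, Real.exp (-1) ^ i := by
        rw [Fin.sum_univ_eq_sum_range, Finset.range_eq_Ico]
    _ ≤ Real.exp (-1) ^ 0 / (1 - Real.exp (-1)) :=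
        geom_sum_Ico_le_of_lt_one (Real.exp_pos _).le (Real.exp_lt_one_iff.mpr (by norm_num))
    _ = _ := hsum

lemma sum_sum_add_mul_mul_mul {ι κ : Type*} (s : Finset ι) (u : Finset κ)
    (a p : ι → ℝ) (b q : κ → ℝ) (ε δ : ℝ) :
    ∑ l ∈ s, ∑ k ∈ u, (ε + δ * (p l + q k)) * a l * b k =
      ε * ((∑ l ∈ s, a l) * ∑ k ∈ u, b k) +
        δ * ((∑ l ∈ s, p l * a l) * ∑ k ∈ u, b k + (∑ l ∈ s, a l) * ∑ k ∈ u, q k * b k) := by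
  rw [Finset.sum_mul_sum, Finset.sum_mul_sum, Finset.sum_mul_sum]
  simp only [Finset.mul_sum, ← Finset.sum_add_distrib]
  exact Finset.sum_congr rfl fun l _ => Finset.sum_congr rfl fun k _ => by ring

lemma sum_sum_add_mul_mul_le {ι κ : Type*} (s : Finset ι) (u : Finset κ)
    (a p : ι → ℝ) (b q : κ → ℝ) {ε δ K : ℝ} (hε : 0 ≤ ε) (hδ : 0 ≤ δ)
    (ha : ∀ l, 0 ≤ a l) (hb : ∀ k, 0 ≤ b k) (hp : ∀ l, 0 ≤ p l) (hq : ∀ k, 0 ≤ q k)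
    (hA : ∑ l ∈ s, a l ≤ K) (hB : ∑ k ∈ u, b k ≤ K) :
    ∑ l ∈ s, ∑ k ∈ u, (ε + δ * (p l + q k)) * a l * b k ≤
      ε * K ^ 2 + δ * K * (∑ l ∈ s, p l * a l + ∑ k ∈ u, q k * b k) := by
  rw [sum_sum_add_mul_mul_mul]
  have hA0 : 0 ≤ ∑ l ∈ s, a l := Finset.sum_nonneg fun l _ => ha l
  have hB0 : 0 ≤ ∑ k ∈ u, b k := Finset.sum_nonneg fun k _ => hb k
  have hPA : 0 ≤ ∑ l ∈ s, p l * a l := Finset.sum_nonneg fun l _ => mul_nonneg (hp l) (ha l)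
  have hQB : 0 ≤ ∑ k ∈ u, q k * b k := Finset.sum_nonneg fun k _ => mul_nonneg (hq k) (hb k)
  have hAB : (∑ l ∈ s, a l) * ∑ k ∈ u, b k ≤ K ^ 2 := by nlinarith
  have hPAB := mul_le_mul_of_nonneg_left hB hPA
  have hAQB := mul_le_mul_of_nonneg_right hA hQB
  nlinarith [mul_le_mul_of_nonneg_left hAB hε, mul_le_mul_of_nonneg_left (add_le_add hPAB hAQB) hδ]

theorem level_set_decomposition_bound_general (n d m L S : ℕ)
    (ε c t : ℝ) (hε : 0 < ε) (hc : 0 < c) (ht : 0 < t)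
    (X : Fin L → Matrix (Fin n) (Fin d) ℝ) (Y : Fin S → Matrix (Fin d) (Fin m) ℝ)
    (hX : ∀ l : Fin L, spec (X l) ≤ Real.exp (-((l : ℝ) + 1) + 1))
    (hY : ∀ s : Fin S, spec (Y s) ≤ Real.exp (-((s : ℝ) + 1) + 1))
    (M : Matrix (Fin d) (Fin d) ℝ)
    (hM : ∀ (l : Fin L) (s : Fin S),
      spec (X l * M * Y s) ≤
        (ε + c * (((X l).rank : ℝ) + ((Y s).rank : ℝ)) / t) * spec (X l) * spec (Y s)) :
    spec ((∑ l, X l) * M * (∑ s, Y s)) ≤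
      ε * Real.exp 1 ^ 2 / (Real.exp 1 - 1) ^ 2 +
        c * Real.exp 1 / ((Real.exp 1 - 1) * t) *
          ((∑ l, ((X l).rank : ℝ) * spec (X l)) +
            ∑ s, ((Y s).rank : ℝ) * spec (Y s)) := by
  have hM' (l : Fin L) (s : Fin S) : spec (X l * M * Y s) ≤
      (ε + c / t * (((X l).rank : ℝ) + ((Y s).rank : ℝ))) * spec (X l) * spec (Y s) := by
    rw [div_mul_eq_mul_div]
    exact hM l s
  calc spec ((∑ l, X l) * M * (∑ s, Y s))
      ≤ ∑ l, ∑ s, spec (X l * M * Y s) := spec_sum_mul_mul_sum_le _ _ _ _ _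
    _ ≤ ∑ l, ∑ s,
          (ε + c / t * (((X l).rank : ℝ) + ((Y s).rank : ℝ))) * spec (X l) * spec (Y s) :=
        Finset.sum_le_sum fun l _ => Finset.sum_le_sum fun s _ => hM' l s
    _ ≤ ε * (Real.exp 1 / (Real.exp 1 - 1)) ^ 2 +
          c / t * (Real.exp 1 / (Real.exp 1 - 1)) *
            ((∑ l, ((X l).rank : ℝ) * spec (X l)) + ∑ s, ((Y s).rank : ℝ) * spec (Y s)) :=
        sum_sum_add_mul_mul_le _ _ _ _ _ _ hε.le (div_nonneg hc.le ht.le)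
          (fun l => spec_nonneg _) (fun s => spec_nonneg _) (fun l => Nat.cast_nonneg _)
          (fun s => Nat.cast_nonneg _) (sum_le_exp_one_div_exp_one_sub_one _ hX)
          (sum_le_exp_one_div_exp_one_sub_one _ hY)
    _ = _ := by
        have : Real.exp 1 - 1 ≠ 0 := by linarith [Real.add_one_lt_exp one_ne_zero]
        field_simp

/-- The deterministic chain of inequalities (result_3) in the paper: summing the
level-set pieces and using the geometric series ∑_{i≥1} e^{−i+1} = e/(e−1). -/
theorem level_set_decomposition_bound (n d m L S : ℕ) (hL : 0 < L) (hS : 0 < S)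
    (ε c t : ℝ) (hε : 0 < ε) (hc : 0 < c) (ht : 0 < t)
    (X : Fin L → Matrix (Fin n) (Fin d) ℝ) (Y : Fin S → Matrix (Fin d) (Fin m) ℝ)
    (hX : ∀ l : Fin L, spec (X l) ≤ Real.exp (-((l : ℝ) + 1) + 1))
    (hY : ∀ s : Fin S, spec (Y s) ≤ Real.exp (-((s : ℝ) + 1) + 1))
    (M : Matrix (Fin d) (Fin d) ℝ)
    (hM : ∀ (l : Fin L) (s : Fin S),
      spec (X l * M * Y s) ≤
        (ε + c * (((X l).rank : ℝ) + ((Y s).rank : ℝ)) / t) * spec (X l) * spec (Y s)) :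
    spec ((∑ l, X l) * M * (∑ s, Y s)) ≤
      ε * Real.exp 1 ^ 2 / (Real.exp 1 - 1) ^ 2 +
        c * Real.exp 1 / ((Real.exp 1 - 1) * t) *
          ((∑ l, ((X l).rank : ℝ) * spec (X l)) +
            ∑ s, ((Y s).rank : ℝ) * spec (Y s)) :=
  level_set_decomposition_bound_general n d m L S ε c t hε hc ht X Y hX hY M hM
end
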